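/- arXiv:0802.4248 — 8 statements merged into one kernel-verified Lean document; each statement's English description precedes it below -/
import Mathlib

section
/- If an effect A is coexistent with both effects B and C, then for every λ with 0 ≤ λ ≤ 1, the effects A and λB + (1−λ)C are coexistent. -/
/-- Effects `A` and `B` are coexistent: there is a four-outcome POVM `(G₁,G₂,G₃,G₄)`
with `A = G₁ + G₂` and `B = G₁ + G₃`. -/
def Coexistent {H : Type*} [NormedAddCommGroup H] [InnerProductSpace ℂ H] [CompleteSpace H]
    (A B : H →L[ℂ] H) : Prop :=
  ∃ G₁ G₂ G₃ G₄ : H →L[ℂ] H,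
    0 ≤ G₁ ∧ 0 ≤ G₂ ∧ 0 ≤ G₃ ∧ 0 ≤ G₄ ∧
    G₁ + G₂ + G₃ + G₄ = 1 ∧ A = G₁ + G₂ ∧ B = G₁ + G₃

theorem Coexistent.smul_add_smul {H : Type*} [NormedAddCommGroup H] [InnerProductSpace ℂ H]
    [CompleteSpace H] {A B A' B' : H →L[ℂ] H} (h : Coexistent A B) (h' : Coexistent A' B')
    {a b : ℝ} (ha : 0 ≤ a) (hb : 0 ≤ b) (hab : a + b = 1) :
    Coexistent (a • A + b • A') (a • B + b • B') := by
  obtain ⟨G₁, G₂, G₃, G₄, hG₁, hG₂, hG₃, hG₄, hG, rfl, rfl⟩ := h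
  obtain ⟨F₁, F₂, F₃, F₄, hF₁, hF₂, hF₃, hF₄, hF, rfl, rfl⟩ := h'
  refine ⟨a • G₁ + b • F₁, a • G₂ + b • F₂, a • G₃ + b • F₃, a • G₄ + b • F₄,
    add_nonneg (smul_nonneg ha hG₁) (smul_nonneg hb hF₁),
    add_nonneg (smul_nonneg ha hG₂) (smul_nonneg hb hF₂),
    add_nonneg (smul_nonneg ha hG₃) (smul_nonneg hb hF₃),
    add_nonneg (smul_nonneg ha hG₄) (smul_nonneg hb hF₄), ?_, by module, by module⟩
  calc a • G₁ + b • F₁ + (a • G₂ + b • F₂) + (a • G₃ + b • F₃) + (a • G₄ + b • F₄)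
      = a • (G₁ + G₂ + G₃ + G₄) + b • (F₁ + F₂ + F₃ + F₄) := by module
    _ = 1 := by rw [hG, hF, ← add_smul, hab, one_smul]

theorem coexistent_convex_general {H : Type*} [NormedAddCommGroup H] [InnerProductSpace ℂ H]
    [CompleteSpace H] (A B C : H →L[ℂ] H)
    (hAB : Coexistent A B) (hAC : Coexistent A C)
    (lam : ℝ) (hlam : 0 ≤ lam ∧ lam ≤ 1) :
    Coexistent A (lam • B + (1 - lam) • C) := by
  have h := hAB.smul_add_smul hAC hlam.1 (sub_nonneg.2 hlam.2) (add_sub_cancel lam 1)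
  rwa [← add_smul, add_sub_cancel, one_smul] at h

theorem coexistent_convex {H : Type*} [NormedAddCommGroup H] [InnerProductSpace ℂ H]
    [CompleteSpace H] (A B C : H →L[ℂ] H)
    (hA : 0 ≤ A ∧ A ≤ 1) (hB : 0 ≤ B ∧ B ≤ 1) (hC : 0 ≤ C ∧ C ≤ 1)
    (hAB : Coexistent A B) (hAC : Coexistent A C)
    (lam : ℝ) (hlam : 0 ≤ lam ∧ lam ≤ 1) :
    Coexistent A (lam • B + (1 - lam) • C) :=
  coexistent_convex_general A B C hAB hAC lam hlam
end

section
/- For 0 ≤ a ≤ α ≤ 2 − a, the sharpness S(α,a) = (1/2)(a² + α(2−α) − √((α² − a²)((2−α)² − a²))) satisfies 0 ≤ S(α,a) ≤ 1; moreover S(α,a) = 1 if and only if a = α = 1. -/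
/-- The sharpness of a qubit effect with parameters `(α, a)`. -/
noncomputable def S (α a : ℝ) : ℝ :=
  (1 / 2) * (a ^ 2 + α * (2 - α) - Real.sqrt ((α ^ 2 - a ^ 2) * ((2 - α) ^ 2 - a ^ 2)))

theorem sharpness_mem_unit_interval (α a : ℝ) (h0 : 0 ≤ a) (h1 : a ≤ α) (h2 : α ≤ 2 - a) :
    0 ≤ S α a ∧ S α a ≤ 1 ∧ (S α a = 1 ↔ a = 1 ∧ α = 1) := by
  have hα0 : 0 ≤ α := le_trans h0 h1
  have hp : a ^ 2 ≤ α * (2 - α) := by nlinarith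
  have hq : α * (2 - α) ≤ 1 := by nlinarith [sq_nonneg (α - 1)]
  have ht0 : 0 ≤ a ^ 2 + α * (2 - α) := by nlinarith
  have ht2 : a ^ 2 + α * (2 - α) ≤ 2 := by linarith
  have hXle : (α ^ 2 - a ^ 2) * ((2 - α) ^ 2 - a ^ 2) ≤ (a ^ 2 + α * (2 - α)) ^ 2 := by
    nlinarith [sq_nonneg a]
  have hsle : Real.sqrt ((α ^ 2 - a ^ 2) * ((2 - α) ^ 2 - a ^ 2)) ≤ a ^ 2 + α * (2 - α) := by
    calc Real.sqrt ((α ^ 2 - a ^ 2) * ((2 - α) ^ 2 - a ^ 2))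
        ≤ Real.sqrt ((a ^ 2 + α * (2 - α)) ^ 2) := Real.sqrt_le_sqrt hXle
      _ = a ^ 2 + α * (2 - α) := Real.sqrt_sq ht0
  have hs0 : 0 ≤ Real.sqrt ((α ^ 2 - a ^ 2) * ((2 - α) ^ 2 - a ^ 2)) := Real.sqrt_nonneg _
  refine ⟨?_, ?_, ?_, ?_⟩
  · unfold S; linarith
  · unfold S; linarith
  · intro hS
    unfold S at hS
    have hseq : Real.sqrt ((α ^ 2 - a ^ 2) * ((2 - α) ^ 2 - a ^ 2))
        = a ^ 2 + α * (2 - α) - 2 := by linarith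
    have hteq : a ^ 2 + α * (2 - α) = 2 := by nlinarith
    have ha1 : a = 1 := by nlinarith
    have hα1 : α = 1 := by nlinarith [sq_nonneg (α - 1)]
    exact ⟨ha1, hα1⟩
  · rintro ⟨rfl, rfl⟩
    unfold S
    norm_num
end

section
/- For 0 ≤ a ≤ α ≤ 2 − a, the sharpness S(α,a) = (1/2)(a² + α(2−α) − √((α² − a²)((2−α)² − a²))) equals 0 if and only if a = 0. -/
theorem sharpness_eq_zero_iff (α a : ℝ) (h0 : 0 ≤ a) (h1 : a ≤ α) (h2 : α ≤ 2 - a) :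
    S α a = 0 ↔ a = 0 := by
  have hα0 : 0 ≤ α := le_trans h0 h1
  have h2α : α ≤ 2 := by linarith
  constructor
  · intro h
    have key : Real.sqrt ((α ^ 2 - a ^ 2) * ((2 - α) ^ 2 - a ^ 2)) = a ^ 2 + α * (2 - α) := by
      unfold S at h; linarith
    have hnn : 0 ≤ (α ^ 2 - a ^ 2) * ((2 - α) ^ 2 - a ^ 2) :=
      mul_nonneg (by nlinarith) (by nlinarith)
    have hsq := Real.sq_sqrt hnn
    rw [key] at hsq
    have ha2 : a ^ 2 = 0 := by nlinarith
    exact pow_eq_zero_iff (by norm_num) |>.mp ha2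
  · intro h
    subst h
    unfold S
    have : (α ^ 2 - 0 ^ 2) * ((2 - α) ^ 2 - 0 ^ 2) = (α * (2 - α)) ^ 2 := by ring
    rw [this, Real.sqrt_sq (by nlinarith)]
    ring
end

section
/- For 0 ≤ a ≤ α ≤ 1, the sharpness satisfies S(α,a) ≤ α, with equality if and only if a = α. -/
theorem sharpness_le_alpha (α a : ℝ) (h0 : 0 ≤ a) (h1 : a ≤ α) (h2 : α ≤ 1) :
    S α a ≤ α ∧ (S α a = α ↔ a = α) := by
  have hs := Real.sqrt_nonneg ((α ^ 2 - a ^ 2) * ((2 - α) ^ 2 - a ^ 2))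
  refine ⟨by unfold S; nlinarith, ?_, ?_⟩
  · intro h
    unfold S at h
    have hsq : α ^ 2 - a ^ 2 ≤ 0 := by nlinarith
    have hge : α ≤ a := by nlinarith
    linarith
  · intro h
    subst h
    unfold S
    have : ((a : ℝ) ^ 2 - a ^ 2) * ((2 - a) ^ 2 - a ^ 2) = 0 := by ring
    rw [this, Real.sqrt_zero]; ring
end

section
/- For 0 ≤ a ≤ α ≤ 1, the sharpness satisfies S(α,a) ≤ a. -/
theorem sharpness_le_a (α a : ℝ) (h0 : 0 ≤ a) (h1 : a ≤ α) (h2 : α ≤ 1) :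
    S α a ≤ a := by
  have key : a ^ 2 + α * (2 - α) - 2 * a ≤
      Real.sqrt ((α ^ 2 - a ^ 2) * ((2 - α) ^ 2 - a ^ 2)) := by
    rcases le_or_gt (a ^ 2 + α * (2 - α) - 2 * a) 0 with h | h
    · exact h.trans (Real.sqrt_nonneg _)
    · rw [show (α ^ 2 - a ^ 2) * ((2 - α) ^ 2 - a ^ 2) =
        (a ^ 2 + α * (2 - α) - 2 * a) * (a ^ 2 + α * (2 - α) + 2 * a) by ring]
      have h2' : (a ^ 2 + α * (2 - α) - 2 * a) ^ 2 ≤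
          (a ^ 2 + α * (2 - α) - 2 * a) * (a ^ 2 + α * (2 - α) + 2 * a) := by
        nlinarith [mul_nonneg h0 h.le]
      calc a ^ 2 + α * (2 - α) - 2 * a
          = Real.sqrt ((a ^ 2 + α * (2 - α) - 2 * a) ^ 2) := by
            rw [Real.sqrt_sq h.le]
        _ ≤ _ := Real.sqrt_le_sqrt h2'
  unfold S
  linarith
end

section
/- For vectors a, b ∈ ℝ³ with ‖a‖, ‖b‖ ≤ 1, the condition ‖a+b‖ + ‖a−b‖ ≤ 2 is equivalent to ‖a‖² + ‖b‖² ≤ 1 + (a·b)², where a·b is the ordinary dot product. -/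
open scoped RealInnerProductSpace

theorem busch_conditions_equivalent (a b : EuclideanSpace ℝ (Fin 3))
    (ha : ‖a‖ ≤ 1) (hb : ‖b‖ ≤ 1) :
    ‖a + b‖ + ‖a - b‖ ≤ 2 ↔ ‖a‖ ^ 2 + ‖b‖ ^ 2 ≤ 1 + ⟪a, b⟫ ^ 2 := by
  have hp : ‖a + b‖ ^ 2 = ‖a‖ ^ 2 + 2 * ⟪a, b⟫ + ‖b‖ ^ 2 := norm_add_sq_real a b
  have hm : ‖a - b‖ ^ 2 = ‖a‖ ^ 2 - 2 * ⟪a, b⟫ + ‖b‖ ^ 2 := norm_sub_sq_real a b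
  have hx0 : 0 ≤ ‖a + b‖ := norm_nonneg _
  have hy0 : 0 ≤ ‖a - b‖ := norm_nonneg _
  have ha0 : 0 ≤ ‖a‖ := norm_nonneg _
  have hb0 : 0 ≤ ‖b‖ := norm_nonneg _
  have hA : ‖a‖ ^ 2 + ‖b‖ ^ 2 ≤ 2 := by nlinarith
  set x := ‖a + b‖
  set y := ‖a - b‖
  have hxy0 : 0 ≤ x * y := mul_nonneg hx0 hy0
  constructor
  · intro h
    have hxy : x * y ≤ 2 - (‖a‖ ^ 2 + ‖b‖ ^ 2) := by nlinarith [sq_nonneg (x + y)]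
    nlinarith [mul_le_mul hxy hxy hxy0 (by linarith)]
  · intro h
    have hsq : (x * y) ^ 2 ≤ (2 - (‖a‖ ^ 2 + ‖b‖ ^ 2)) ^ 2 := by nlinarith
    have hxy : x * y ≤ 2 - (‖a‖ ^ 2 + ‖b‖ ^ 2) := by
      nlinarith [sq_nonneg (x * y + (2 - (‖a‖ ^ 2 + ‖b‖ ^ 2)))]
    nlinarith [sq_nonneg (x + y - 2)]
end

section
/- Let 0 < a ≤ α ≤ 1 and 1 − S(α,a) < β ≤ 1, where S(α,a) = (1/2)(a² + α(2−α) − √((α²−a²)((2−α)²−a²))). Then D := (1−α)² − β((1−α)² + 1 − a²) + β² ≥ 0 and √D ≤ a + β − 1; in particular a + β − 1 > 0. -/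
theorem sqrtD_le (a α β : ℝ) (h0 : 0 < a) (h1 : a ≤ α) (h2 : α ≤ 1)
    (h3 : 1 - S α a < β) (h4 : β ≤ 1) :
    0 ≤ (1 - α) ^ 2 - β * ((1 - α) ^ 2 + 1 - a ^ 2) + β ^ 2 ∧
    Real.sqrt ((1 - α) ^ 2 - β * ((1 - α) ^ 2 + 1 - a ^ 2) + β ^ 2) ≤ a + β - 1 ∧
    0 < a + β - 1 := by
  have hP : 0 ≤ (α ^ 2 - a ^ 2) * ((2 - α) ^ 2 - a ^ 2) :=
    mul_nonneg (by nlinarith) (by nlinarith)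
  set s := Real.sqrt ((α ^ 2 - a ^ 2) * ((2 - α) ^ 2 - a ^ 2)) with hs
  have hs0 : 0 ≤ s := Real.sqrt_nonneg _
  have hs2 : s ^ 2 = (α ^ 2 - a ^ 2) * ((2 - α) ^ 2 - a ^ 2) := Real.sq_sqrt hP
  simp only [S] at h3
  rw [← hs] at h3
  -- β bound: 2β > 1 + (1-α)^2 - a^2 + s
  have ht : s < 2 * β - ((1 - α) ^ 2 + 1 - a ^ 2) := by nlinarith
  have htpos : (0:ℝ) < 2 * β - ((1 - α) ^ 2 + 1 - a ^ 2) := lt_of_le_of_lt hs0 ht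
  have hD : 0 ≤ (1 - α) ^ 2 - β * ((1 - α) ^ 2 + 1 - a ^ 2) + β ^ 2 := by
    nlinarith [hs2, mul_le_mul_of_nonneg_left ht.le hs0,
      mul_le_mul_of_nonneg_left ht.le htpos.le]
  -- positivity of a + β - 1: need s ≥ (1-a)^2 - (1-α)^2
  have htnn : (0:ℝ) ≤ (1 - a) ^ 2 - (1 - α) ^ 2 := by nlinarith
  have hsge : (1 - a) ^ 2 - (1 - α) ^ 2 ≤ s := by
    nlinarith [hs2, sq_nonneg (s - ((1 - a) ^ 2 - (1 - α) ^ 2)),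
      sq_nonneg (s + ((1 - a) ^ 2 - (1 - α) ^ 2))]
  have hpos : 0 < a + β - 1 := by nlinarith
  have key : 0 ≤ (1 - β) * ((α - a) * (2 - a - α)) :=
    mul_nonneg (by linarith) (mul_nonneg (by linarith) (by linarith))
  have hid : (a + β - 1) ^ 2 - ((1 - α) ^ 2 - β * ((1 - α) ^ 2 + 1 - a ^ 2) + β ^ 2)
      = (1 - β) * ((α - a) * (2 - a - α)) := by ring
  have hle : (1 - α) ^ 2 - β * ((1 - α) ^ 2 + 1 - a ^ 2) + β ^ 2 ≤ (a + β - 1) ^ 2 := by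
    linarith [key, hid]
  refine ⟨hD, ?_, hpos⟩
  calc Real.sqrt ((1 - α) ^ 2 - β * ((1 - α) ^ 2 + 1 - a ^ 2) + β ^ 2)
      ≤ Real.sqrt ((a + β - 1) ^ 2) := Real.sqrt_le_sqrt hle
    _ = a + β - 1 := Real.sqrt_sq hpos.le
end

section
/- Let 0 < a ≤ α ≤ 1, 0 < β ≤ 1, and suppose β > 1 − S(α,a). Define b₀ = (1−α)(1−β)/a, w = (1/a)√((1−α)² − β((1−α)²+1−a²) + β²), and for |bₓ − b₀| < w define by_max(bₓ) = (1/(2a))·√(((2−α)²−a²)(a² − (a(bₓ−b₀)+(1−β))²)) + (1/(2a))·√((α²−a²)(a² − (a(bₓ−b₀)−(1−β))²)). Then for all bₓ with |bₓ − b₀| < w, the point (bₓ, by_max(bₓ)) has Euclidean norm strictly less than β, i.e., bₓ² + by_max(bₓ)² < β². -/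
set_option maxHeartbeats 1000000 in
theorem boundary_inside_circle (a α β : ℝ) (h0 : 0 < a) (h1 : a ≤ α) (h2 : α ≤ 1)
    (h3 : 0 < β) (h4 : β ≤ 1) (h5 : 1 - S α a < β)
    (b₀ w : ℝ) (bymax : ℝ → ℝ)
    (hb₀ : b₀ = (1 - α) * (1 - β) / a)
    (hw : w = (1 / a) * Real.sqrt ((1 - α) ^ 2 - β * ((1 - α) ^ 2 + 1 - a ^ 2) + β ^ 2))
    (hbymax : ∀ bx, bymax bx =
      (1 / (2 * a)) * Real.sqrt (((2 - α) ^ 2 - a ^ 2) *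
        (a ^ 2 - (a * (bx - b₀) + (1 - β)) ^ 2)) +
      (1 / (2 * a)) * Real.sqrt ((α ^ 2 - a ^ 2) *
        (a ^ 2 - (a * (bx - b₀) - (1 - β)) ^ 2))) :
    ∀ bx : ℝ, |bx - b₀| < w → bx ^ 2 + bymax bx ^ 2 < β ^ 2 := by
  intro bx hbx
  rw [hbymax bx]
  set u : ℝ := 1 - β with hu_def
  set s : ℝ := a * (bx - b₀) with hs_def
  have hu0 : 0 ≤ u := by rw [hu_def]; linarith
  have ha2 : (0:ℝ) < a ^ 2 := by positivity
  have hA : (0:ℝ) ≤ (2 - α) ^ 2 - a ^ 2 := by nlinarith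
  have hB : (0:ℝ) ≤ α ^ 2 - a ^ 2 := by nlinarith
  have hma : 2 * a ≤ α * (2 - α) + a ^ 2 := by
    nlinarith [mul_nonneg (sub_nonneg.2 h1) (show (0:ℝ) ≤ 2 - α - a by linarith)]
  have hABnn : (0:ℝ) ≤ (α ^ 2 - a ^ 2) * ((2 - α) ^ 2 - a ^ 2) := mul_nonneg hB hA
  -- lower bound on the sqrt in S
  have hsq : α * (2 - α) + a ^ 2 - 2 * a ≤
      Real.sqrt ((α ^ 2 - a ^ 2) * ((2 - α) ^ 2 - a ^ 2)) := by
    have h1sq : Real.sqrt ((α * (2 - α) + a ^ 2 - 2 * a) ^ 2) ≤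
        Real.sqrt ((α ^ 2 - a ^ 2) * ((2 - α) ^ 2 - a ^ 2)) := by
      apply Real.sqrt_le_sqrt
      nlinarith [mul_nonneg h0.le (sub_nonneg.2 hma)]
    rw [Real.sqrt_sq_eq_abs] at h1sq
    exact le_trans (le_abs_self _) h1sq
  have hua : u < a := by
    simp only [S] at h5
    rw [hu_def]
    linarith
  -- the quantity under the sqrt in w
  set E : ℝ := a ^ 2 - (α * (2 - α) + a ^ 2) * u + u ^ 2 with hE_def
  have hargE : (1 - α) ^ 2 - β * ((1 - α) ^ 2 + 1 - a ^ 2) + β ^ 2 = E := by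
    rw [hE_def, hu_def]; ring
  have hw' : w = (1 / a) * Real.sqrt E := by rw [hw, hargE]
  have hwpos : 0 < w := lt_of_le_of_lt (abs_nonneg _) hbx
  have hsE : 0 < Real.sqrt E := by
    rcases lt_or_ge 0 (Real.sqrt E) with h | h
    · exact h
    · exfalso
      have h0' : Real.sqrt E = 0 := le_antisymm h (Real.sqrt_nonneg E)
      rw [hw', h0', mul_zero] at hwpos
      exact lt_irrefl 0 hwpos
  have hEpos : 0 < E := Real.sqrt_pos.mp hsE
  have hw2 : a ^ 2 * w ^ 2 = E := by
    rw [hw', mul_pow, Real.sq_sqrt hEpos.le]; field_simp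
  have hs2 : s ^ 2 < E := by
    obtain ⟨hl, hr⟩ := abs_lt.mp hbx
    have hb2 : (bx - b₀) ^ 2 < w ^ 2 := sq_lt_sq' hl hr
    rw [hs_def]
    nlinarith [mul_lt_mul_of_pos_left hb2 ha2]
  have hD : 0 < E - s ^ 2 := by linarith
  have hEle : E ≤ (a - u) ^ 2 := by
    rw [hE_def]; nlinarith [mul_nonneg hu0 (sub_nonneg.2 hma)]
  have hsa : s ^ 2 < (a - u) ^ 2 := lt_of_lt_of_le hs2 hEle
  have hau : 0 < a - u := by linarith
  have hs_lt : s < a - u := by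
    by_contra h; push_neg at h; nlinarith
  have hs_gt : -(a - u) < s := by
    by_contra h; push_neg at h; nlinarith
  have hX : (0:ℝ) ≤ a ^ 2 - (s + u) ^ 2 := by
    nlinarith [mul_pos (show (0:ℝ) < a - (s + u) by linarith)
      (show (0:ℝ) < a + (s + u) by linarith)]
  have hY : (0:ℝ) ≤ a ^ 2 - (s - u) ^ 2 := by
    nlinarith [mul_pos (show (0:ℝ) < a - (s - u) by linarith)
      (show (0:ℝ) < a + (s - u) by linarith)]
  set p : ℝ := Real.sqrt (((2 - α) ^ 2 - a ^ 2) * (a ^ 2 - (s + u) ^ 2)) with hp_def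
  set q : ℝ := Real.sqrt ((α ^ 2 - a ^ 2) * (a ^ 2 - (s - u) ^ 2)) with hq_def
  have hp2 : p ^ 2 = ((2 - α) ^ 2 - a ^ 2) * (a ^ 2 - (s + u) ^ 2) :=
    Real.sq_sqrt (mul_nonneg hA hX)
  have hq2 : q ^ 2 = (α ^ 2 - a ^ 2) * (a ^ 2 - (s - u) ^ 2) :=
    Real.sq_sqrt (mul_nonneg hB hY)
  have hpq : p * q = Real.sqrt ((((2 - α) ^ 2 - a ^ 2) * (a ^ 2 - (s + u) ^ 2)) *
      ((α ^ 2 - a ^ 2) * (a ^ 2 - (s - u) ^ 2))) :=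
    (Real.sqrt_mul (mul_nonneg hA hX) _).symm
  set R : ℝ := (α * (2 - α) + a ^ 2) * (a ^ 2 + u ^ 2 - s ^ 2) - 4 * a ^ 2 * u with hR_def
  have hmpos : (0:ℝ) < α * (2 - α) + a ^ 2 := by linarith
  have hRpos : 0 < R := by
    have hid : R = (α * (2 - α) + a ^ 2) * (E - s ^ 2) +
        ((α ^ 2 - a ^ 2) * ((2 - α) ^ 2 - a ^ 2)) * u := by
      rw [hR_def, hE_def]; ring
    linarith only [hid, mul_pos hmpos hD, mul_nonneg hABnn hu0]
  have hpq_lt : p * q < R := by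
    rw [hpq, Real.sqrt_lt' hRpos]
    have hiden2 : R ^ 2 - (((2 - α) ^ 2 - a ^ 2) * (a ^ 2 - (s + u) ^ 2)) *
        ((α ^ 2 - a ^ 2) * (a ^ 2 - (s - u) ^ 2)) = 4 * a ^ 2 * (E - s ^ 2) ^ 2 := by
      rw [hR_def, hE_def]; ring
    linarith only [hiden2, mul_pos ha2 (mul_pos hD hD)]
  have habx : a * bx = (1 - α) * u + s := by
    rw [hs_def, hu_def, hb₀]
    field_simp
    ring
  have hbb : 4 * a ^ 2 * bx ^ 2 = 4 * ((1 - α) * u + s) ^ 2 := by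
    rw [← habx]; ring
  have hiden : 4 * ((1 - α) * u + s) ^ 2 + ((2 - α) ^ 2 - a ^ 2) * (a ^ 2 - (s + u) ^ 2) +
      (α ^ 2 - a ^ 2) * (a ^ 2 - (s - u) ^ 2) + 2 * R = 4 * a ^ 2 * β ^ 2 := by
    rw [hR_def, hu_def]; ring
  have key : 4 * a ^ 2 * bx ^ 2 + (p + q) ^ 2 < 4 * a ^ 2 * β ^ 2 := by
    have hexp : (p + q) ^ 2 = p ^ 2 + q ^ 2 + 2 * (p * q) := by ring
    rw [hexp]
    linarith only [hp2, hq2, hbb, hiden, hpq_lt]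
  have hrw : bx ^ 2 + (1 / (2 * a) * p + 1 / (2 * a) * q) ^ 2 =
      (4 * a ^ 2 * bx ^ 2 + (p + q) ^ 2) / (4 * a ^ 2) := by
    field_simp
    ring
  rw [hrw, div_lt_iff₀ (by positivity : (0:ℝ) < 4 * a ^ 2)]
  linarith only [key]
end
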